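/- Consider a complex balanced chemical reaction network without boundary equilibria for the mass vector M ∈ ℝ^m_{>0}, with unique strictly positive complex balance equilibrium c∞ satisfying Q c∞ = M. Then there exists λ > 0 (depending only on the network data, M and an upper bound on the initial relative entropy) such that every differentiable solution c : [0,∞) → ℝ^N_{>0} of the ODE system c'(t) = R(c(t)) with Q c(0) = M satisfies E(c(t)|c∞) ≤ E(c(0)|c∞) e^{−λ t} for all t > 0, and consequently Σ_{i=1}^N |c_i(t) − c_{i,∞}|² ≤ C E(c(0)|c∞) e^{−λ t}, where C = (√K̃ + max_i √c_{i,∞})² and K̃ := 2(E(c(0)|c∞) + Σ_{i=1}^N c_{i,∞}). -/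

import Mathlib

/- STATEMENT 4: Exponential convergence to equilibrium for the ODE system c' = R(c) of a
complex balanced network without boundary equilibria: there is λ > 0 (depending only on the
network data, M, and an upper bound K on the initial relative entropy) such that every
strictly positive solution with Q c(0) = M and E(c(0)|c∞) ≤ K satisfies
E(c(t)|c∞) ≤ E(c(0)|c∞) e^{-λ t} and
∑_i |c_i(t) - c_{i,∞}|² ≤ (√K̃ + max_i √c_{i,∞})² E(c(0)|c∞) e^{-λ t},
where K̃ = 2(E(c(0)|c∞) + ∑_i c_{i,∞}). -/

namespace Stmt4

noncomputable def cpow {N : ℕ} (c : Fin N → ℝ) (y : Fin N → ℕ) : ℝ :=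
  ∏ i, c i ^ y i

noncomputable def Psi (x y : ℝ) : ℝ := x * Real.log (x / y) - x + y

def IsComplexBalanced {N R : ℕ} (y y' : Fin R → Fin N → ℕ) (k : Fin R → ℝ)
    (z : Fin N → ℝ) : Prop :=
  ∀ yc : Fin N → ℕ,
    ∑ r ∈ Finset.univ.filter (fun r => y r = yc), k r * cpow z (y r) =
    ∑ s ∈ Finset.univ.filter (fun s => y' s = yc), k s * cpow z (y s)

/-- Mass action reaction vector `R(c) = ∑_r k_r c^{y_r} (y'_r - y_r)`. -/
noncomputable def Rvec {N R : ℕ} (y y' : Fin R → Fin N → ℕ) (k : Fin R → ℝ)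
    (c : Fin N → ℝ) : Fin N → ℝ :=
  fun i => ∑ r, k r * cpow c (y r) * ((y' r i : ℝ) - (y r i : ℝ))

noncomputable def Ent {N : ℕ} (c cinf : Fin N → ℝ) : ℝ :=
  ∑ i, (c i * Real.log (c i / cinf i) - c i + cinf i)




lemma slog_key {s : ℝ} (hs : 0 < s) : s - 1 ≤ s * Real.log s := by
  have h := Real.log_le_sub_one_of_pos (inv_pos.2 hs)
  rw [Real.log_inv] at h
  have := mul_le_mul_of_nonneg_left h hs.le
  rw [mul_sub, mul_inv_cancel₀ hs.ne'] at this
  nlinarith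

lemma sq_sub_sqrt_le_psi {x y : ℝ} (hx : 0 ≤ x) (hy : 0 < y) :
    (Real.sqrt x - Real.sqrt y) ^ 2 ≤ Psi x y := by
  rcases eq_or_lt_of_le hx with h | hx
  · simp [Psi, ← h, Real.sq_sqrt hy.le, Real.sqrt_eq_zero']
  · set s := Real.sqrt (x / y) with hs_def
    have hs : 0 < s := Real.sqrt_pos.2 (div_pos hx hy)
    have ha : (0:ℝ) < Real.sqrt y := Real.sqrt_pos.2 hy
    have hsa : Real.sqrt x = s * Real.sqrt y := by
      rw [hs_def, Real.sqrt_div hx.le, div_mul_cancel₀ _ ha.ne']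
    have hx2 : x = s ^ 2 * Real.sqrt y ^ 2 := by
      rw [← mul_pow, ← hsa, Real.sq_sqrt hx.le]
    have hy2 : y = Real.sqrt y ^ 2 := (Real.sq_sqrt hy.le).symm
    have hlog : Real.log (x / y) = 2 * Real.log s := by
      rw [hs_def, Real.log_sqrt (div_pos hx hy).le]; ring
    have key := slog_key hs
    have hkey2 := mul_le_mul_of_nonneg_left key (by positivity : (0:ℝ) ≤ 2 * Real.sqrt y ^ 2 * s)
    unfold Psi
    rw [hlog, hsa]
    nlinarith [Real.sq_sqrt hy.le, hs.le, ha.le]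

lemma psi_nonneg {x y : ℝ} (hx : 0 ≤ x) (hy : 0 < y) : 0 ≤ Psi x y :=
  le_trans (by positivity) (sq_sub_sqrt_le_psi hx hy)

lemma psi_le_sq_div {x y : ℝ} (hx : 0 ≤ x) (hy : 0 < y) :
    Psi x y ≤ (x - y) ^ 2 / y := by
  rcases eq_or_lt_of_le hx with h | hx
  · simp only [Psi, ← h]
    rw [zero_div, Real.log_zero]
    rw [le_div_iff₀ hy]; nlinarith
  · have h1 : Real.log (x / y) ≤ x / y - 1 := Real.log_le_sub_one_of_pos (div_pos hx hy)
    have h2 : x * Real.log (x / y) ≤ x * (x/y - 1) := mul_le_mul_of_nonneg_left h1 hx.le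
    unfold Psi
    rw [div_sub_one hy.ne'] at h2
    have e : x * ((x - y) / y) * y = x * (x - y) := by field_simp
    rw [le_div_iff₀ hy]
    nlinarith [mul_le_mul_of_nonneg_right h2 hy.le]

lemma le_two_psi {x y : ℝ} (hx : 0 ≤ x) (hy : 0 < y) : x ≤ 2 * Psi x y + 2 * y := by
  have h := sq_sub_sqrt_le_psi hx hy
  have hxy : Real.sqrt x * Real.sqrt y ≤ x / 4 + y := by
    nlinarith [sq_nonneg (Real.sqrt x / 2 - Real.sqrt y), Real.sq_sqrt hx, Real.sq_sqrt hy.le]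
  nlinarith [Real.sq_sqrt hx, Real.sq_sqrt hy.le]

lemma sq_le_mul_log {x y M0 : ℝ} (hx : 0 < x) (hy : 0 < y) (hxM : x ≤ M0) (hyM : y ≤ M0) :
    (x - y) ^ 2 ≤ M0 * ((x - y) * Real.log (x / y)) := by
  have hl1 : x - y ≤ x * Real.log (x / y) := by
    have h := Real.log_le_sub_one_of_pos (div_pos hy hx)
    have h2 := mul_le_mul_of_nonneg_left h hx.le
    rw [div_sub_one hx.ne'] at h2
    have e : x * ((y - x) / x) = y - x := by field_simp
    have hlog : Real.log (y / x) = - Real.log (x / y) := by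
      rw [Real.log_div hy.ne' hx.ne', Real.log_div hx.ne' hy.ne']; ring
    rw [hlog] at h2; nlinarith [e]
  have hl2 : y * Real.log (x / y) ≤ x - y := by
    have h := Real.log_le_sub_one_of_pos (div_pos hx hy)
    have h2 := mul_le_mul_of_nonneg_left h hy.le
    rw [div_sub_one hy.ne'] at h2
    have e : y * ((x - y) / y) = x - y := by field_simp
    linarith [e ▸ h2]
  rcases le_total y x with hc | hc
  · have hL : 0 ≤ Real.log (x / y) := Real.log_nonneg ((one_le_div hy).2 hc)
    nlinarith [mul_le_mul_of_nonneg_left hl1 (sub_nonneg.2 hc), mul_nonneg (sub_nonneg.2 hc) hL]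
  · have hL : Real.log (x / y) ≤ 0 :=
      Real.log_nonpos (by positivity) ((div_le_one hy).2 hc)
    nlinarith [mul_le_mul_of_nonneg_left hl2 (sub_nonneg.2 hc),
      mul_nonneg (sub_nonneg.2 hc) (neg_nonneg.2 hL)]

lemma exp_sub_exp_lb {p q B : ℝ} (hp : |p| ≤ B) (hq : |q| ≤ B) :
    Real.exp (-B) * |p - q| ≤ |Real.exp p - Real.exp q| := by
  have main : ∀ a b : ℝ, b ≤ a → |a| ≤ B → |b| ≤ B →
      Real.exp (-B) * (a - b) ≤ Real.exp a - Real.exp b := by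
    intro a b hba haB hbB
    have h1 : Real.exp b * (a - b) ≤ Real.exp a - Real.exp b := by
      have := Real.add_one_le_exp (a - b)
      have h2 := mul_le_mul_of_nonneg_left this (Real.exp_pos b).le
      rw [← Real.exp_add] at h2
      rw [mul_add, mul_one] at h2
      rw [add_sub_cancel] at h2
      linarith
    have h3 : Real.exp (-B) ≤ Real.exp b := Real.exp_le_exp.2 (by
      have := abs_le.1 hbB; linarith [this.1])
    nlinarith [mul_le_mul_of_nonneg_right h3 (sub_nonneg.2 hba)]
  rcases le_total q p with h | h
  · rw [abs_of_nonneg (sub_nonneg.2 h),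
      abs_of_nonneg (sub_nonneg.2 (Real.exp_le_exp.2 h))]
    exact main p q h hp hq
  · rw [abs_of_nonpos (sub_nonpos.2 h),
      abs_of_nonpos (sub_nonpos.2 (Real.exp_le_exp.2 h)), neg_sub, neg_sub]
    exact main q p h hq hp










/-- relative monomial -/
noncomputable def muw {N : ℕ} (cinf c : Fin N → ℝ) (yc : Fin N → ℕ) : ℝ :=
  ∏ i, (c i / cinf i) ^ yc i

section Net
variable {N R : ℕ} (y y' : Fin R → Fin N → ℕ) (k : Fin R → ℝ) (cinf : Fin N → ℝ)

lemma cpow_pos {c : Fin N → ℝ} (hc : ∀ i, 0 < c i) (yc : Fin N → ℕ) : 0 < cpow c yc := by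
  unfold cpow; exact Finset.prod_pos fun i _ => pow_pos (hc i) _

lemma muw_nonneg {c : Fin N → ℝ} (hc : ∀ i, 0 ≤ c i) (hcinf : ∀ i, 0 < cinf i)
    (yc : Fin N → ℕ) : 0 ≤ muw cinf c yc := by
  unfold muw
  exact Finset.prod_nonneg fun i _ => pow_nonneg (div_nonneg (hc i) (hcinf i).le) _

lemma muw_pos {c : Fin N → ℝ} (hc : ∀ i, 0 < c i) (hcinf : ∀ i, 0 < cinf i)
    (yc : Fin N → ℕ) : 0 < muw cinf c yc := by
  unfold muw; exact Finset.prod_pos fun i _ => pow_pos (div_pos (hc i) (hcinf i)) _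

lemma cpow_eq_muw (hcinf : ∀ i, 0 < cinf i) (c : Fin N → ℝ) (yc : Fin N → ℕ) :
    cpow c yc = cpow cinf yc * muw cinf c yc := by
  unfold cpow muw
  rw [← Finset.prod_mul_distrib]
  refine Finset.prod_congr rfl fun i _ => ?_
  rw [← mul_pow, mul_div_cancel₀ _ (hcinf i).ne']

lemma log_muw {c : Fin N → ℝ} (hc : ∀ i, 0 < c i) (hcinf : ∀ i, 0 < cinf i)
    (yc : Fin N → ℕ) :
    Real.log (muw cinf c yc) = ∑ i, (yc i : ℝ) * Real.log (c i / cinf i) := by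
  unfold muw
  rw [Real.log_prod]
  · exact Finset.sum_congr rfl fun i _ => Real.log_pow _ _
  · intro i _
    exact pow_ne_zero _ (div_pos (hc i) (hcinf i)).ne'

/-- entropy production (relative-entropy form) -/
noncomputable def Dent {N R : ℕ} (y y' : Fin R → Fin N → ℕ) (k : Fin R → ℝ)
    (cinf c : Fin N → ℝ) : ℝ :=
  ∑ r, k r * cpow cinf (y r) * Psi (muw cinf c (y r)) (muw cinf c (y' r))

/-- square-root lower bound for entropy production -/
noncomputable def Dq {N R : ℕ} (y y' : Fin R → Fin N → ℕ) (k : Fin R → ℝ)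
    (cinf c : Fin N → ℝ) : ℝ :=
  ∑ r, k r * cpow cinf (y r) *
    (Real.sqrt (muw cinf c (y r)) - Real.sqrt (muw cinf c (y' r))) ^ 2

/-- complex balance transported: the "b-sum equals a-sum" identity. -/
lemma bal_sum (hbal : IsComplexBalanced y y' k cinf) (c : Fin N → ℝ) :
    ∑ r, k r * cpow cinf (y r) * muw cinf c (y' r) =
    ∑ r, k r * cpow cinf (y r) * muw cinf c (y r) := by
  classical
  set T : Finset (Fin N → ℕ) := (Finset.univ.image y) ∪ (Finset.univ.image y') with hT
  have hmem : ∀ r : Fin R, y r ∈ T := fun r =>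
    Finset.mem_union_left _ (Finset.mem_image_of_mem y (Finset.mem_univ r))
  have hmem' : ∀ r : Fin R, y' r ∈ T := fun r =>
    Finset.mem_union_right _ (Finset.mem_image_of_mem y' (Finset.mem_univ r))
  rw [← Finset.sum_fiberwise_of_maps_to (fun r _ => hmem' r)
    (fun r => k r * cpow cinf (y r) * muw cinf c (y' r)),
    ← Finset.sum_fiberwise_of_maps_to (fun r _ => hmem r)
    (fun r => k r * cpow cinf (y r) * muw cinf c (y r))]
  refine Finset.sum_congr rfl fun yc _ => ?_
  have h1 : ∑ r ∈ Finset.univ.filter (fun r => y' r = yc),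
      k r * cpow cinf (y r) * muw cinf c (y' r) =
      (∑ r ∈ Finset.univ.filter (fun r => y' r = yc), k r * cpow cinf (y r)) * muw cinf c yc := by
    rw [Finset.sum_mul]
    refine Finset.sum_congr rfl fun r hr => ?_
    rw [(Finset.mem_filter.1 hr).2]
  have h2 : ∑ r ∈ Finset.univ.filter (fun r => y r = yc),
      k r * cpow cinf (y r) * muw cinf c (y r) =
      (∑ r ∈ Finset.univ.filter (fun r => y r = yc), k r * cpow cinf (y r)) * muw cinf c yc := by
    rw [Finset.sum_mul]
    refine Finset.sum_congr rfl fun r hr => ?_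
    rw [(Finset.mem_filter.1 hr).2]
  rw [h1, h2]
  congr 1
  have hb := hbal yc
  have e1 : ∀ r ∈ Finset.univ.filter (fun r => y r = yc),
      k r * cpow cinf (y r) = k r * cpow cinf (y r) := fun _ _ => rfl
  calc ∑ r ∈ Finset.univ.filter (fun r => y' r = yc), k r * cpow cinf (y r)
      = ∑ s ∈ Finset.univ.filter (fun s => y' s = yc), k s * cpow cinf (y s) := rfl
    _ = ∑ r ∈ Finset.univ.filter (fun r => y r = yc), k r * cpow cinf (y r) := (hbal yc).symm

/-- entropy production identity -/
lemma eprod_eq (hbal : IsComplexBalanced y y' k cinf) (hcinf : ∀ i, 0 < cinf i)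
    {c : Fin N → ℝ} (hc : ∀ i, 0 < c i) :
    ∑ i, Real.log (c i / cinf i) * Rvec y y' k c i = - Dent y y' k cinf c := by
  have step1 : ∑ i, Real.log (c i / cinf i) * Rvec y y' k c i =
      ∑ r, k r * cpow c (y r) *
        (∑ i, ((y' r i : ℝ) - (y r i : ℝ)) * Real.log (c i / cinf i)) := by
    unfold Rvec
    simp only [Finset.mul_sum]
    rw [Finset.sum_comm]
    refine Finset.sum_congr rfl fun r _ => Finset.sum_congr rfl fun i _ => by ring
  rw [step1]
  have key : ∀ r : Fin R, k r * cpow c (y r) *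
      (∑ i, ((y' r i : ℝ) - (y r i : ℝ)) * Real.log (c i / cinf i)) =
      -(k r * cpow cinf (y r) * Psi (muw cinf c (y r)) (muw cinf c (y' r)))
      + (k r * cpow cinf (y r) * muw cinf c (y' r)
         - k r * cpow cinf (y r) * muw cinf c (y r)) := by
    intro r
    have ha : 0 < muw cinf c (y r) := muw_pos cinf hc hcinf _
    have hb : 0 < muw cinf c (y' r) := muw_pos cinf hc hcinf _
    have hsum : ∑ i, ((y' r i : ℝ) - (y r i : ℝ)) * Real.log (c i / cinf i) =
        Real.log (muw cinf c (y' r)) - Real.log (muw cinf c (y r)) := by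
      rw [log_muw cinf hc hcinf, log_muw cinf hc hcinf, ← Finset.sum_sub_distrib]
      exact Finset.sum_congr rfl fun i _ => by ring
    rw [hsum, cpow_eq_muw cinf hcinf c]
    unfold Psi
    rw [Real.log_div ha.ne' hb.ne']
    ring
  rw [Finset.sum_congr rfl fun r _ => key r, Finset.sum_add_distrib,
    Finset.sum_sub_distrib, bal_sum y y' k cinf hbal c, sub_self, add_zero,
    Finset.sum_neg_distrib]
  rfl

end Net
section Net2
variable {N R : ℕ} (y y' : Fin R → Fin N → ℕ) (k : Fin R → ℝ) (cinf : Fin N → ℝ)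

lemma ent_eq_psi (c : Fin N → ℝ) : Ent c cinf = ∑ i, Psi (c i) (cinf i) := rfl

lemma ent_nonneg (hcinf : ∀ i, 0 < cinf i) {c : Fin N → ℝ} (hc : ∀ i, 0 ≤ c i) :
    0 ≤ Ent c cinf := by
  rw [ent_eq_psi]
  exact Finset.sum_nonneg fun i _ => psi_nonneg (hc i) (hcinf i)

lemma dq_nonneg (hk : ∀ r, 0 < k r) (hcinf : ∀ i, 0 < cinf i) (c : Fin N → ℝ) :
    0 ≤ Dq y y' k cinf c := by
  refine Finset.sum_nonneg fun r _ => ?_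
  have h1 := cpow_pos hcinf (y r)
  have h2 := hk r
  positivity

lemma dq_le_dent (hk : ∀ r, 0 < k r) (hcinf : ∀ i, 0 < cinf i) (hbal : IsComplexBalanced y y' k cinf)
    {c : Fin N → ℝ} (hc : ∀ i, 0 < c i) :
    Dq y y' k cinf c ≤ Dent y y' k cinf c := by
  refine Finset.sum_le_sum fun r _ => ?_
  have hκ : 0 ≤ k r * cpow cinf (y r) :=
    (mul_pos (hk r) (cpow_pos hcinf (y r))).le
  exact mul_le_mul_of_nonneg_left
    (sq_sub_sqrt_le_psi (muw_nonneg cinf (fun i => (hc i).le) hcinf _)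
      (muw_pos cinf hc hcinf _)) hκ

lemma dent_nonneg (hk : ∀ r, 0 < k r) (hcinf : ∀ i, 0 < cinf i)
    {c : Fin N → ℝ} (hc : ∀ i, 0 < c i) :
    0 ≤ Dent y y' k cinf c := by
  refine Finset.sum_nonneg fun r _ => ?_
  have h1 := mul_pos (hk r) (cpow_pos hcinf (y r))
  have h2 := psi_nonneg (muw_nonneg cinf (fun i => (hc i).le) hcinf (y r))
    (muw_pos cinf hc hcinf (y' r))
  positivity

lemma dq_zero_balanced (hk : ∀ r, 0 < k r) (hcinf : ∀ i, 0 < cinf i)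
    (hbal : IsComplexBalanced y y' k cinf) {c : Fin N → ℝ} (hc : ∀ i, 0 ≤ c i)
    (hDq : Dq y y' k cinf c = 0) : IsComplexBalanced y y' k c := by
  classical
  have hterm : ∀ r : Fin R, muw cinf c (y r) = muw cinf c (y' r) := by
    intro r
    have hz := (Finset.sum_eq_zero_iff_of_nonneg (fun r _ => by
      have h1 := (mul_pos (hk r) (cpow_pos hcinf (y r))).le
      positivity)).1 hDq r (Finset.mem_univ r)
    have hκ : 0 < k r * cpow cinf (y r) := mul_pos (hk r) (cpow_pos hcinf (y r))
    have hsq : (Real.sqrt (muw cinf c (y r)) - Real.sqrt (muw cinf c (y' r))) ^ 2 = 0 := by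
      rcases mul_eq_zero.1 hz with h | h
      · exact absurd h hκ.ne'
      · exact h
    have := sub_eq_zero.1 (pow_eq_zero_iff (by norm_num : 2 ≠ 0) |>.1 hsq)
    have h1 := Real.sq_sqrt (muw_nonneg cinf hc hcinf (y r))
    have h2 := Real.sq_sqrt (muw_nonneg cinf hc hcinf (y' r))
    rw [← h1, ← h2, this]
  intro yc
  have h1 : ∑ r ∈ Finset.univ.filter (fun r => y r = yc), k r * cpow c (y r) =
      (∑ r ∈ Finset.univ.filter (fun r => y r = yc), k r * cpow cinf (y r)) * muw cinf c yc := by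
    rw [Finset.sum_mul]
    refine Finset.sum_congr rfl fun r hr => ?_
    rw [cpow_eq_muw cinf hcinf, (Finset.mem_filter.1 hr).2]; ring
  have h2 : ∑ s ∈ Finset.univ.filter (fun s => y' s = yc), k s * cpow c (y s) =
      (∑ s ∈ Finset.univ.filter (fun s => y' s = yc), k s * cpow cinf (y s)) * muw cinf c yc := by
    rw [Finset.sum_mul]
    refine Finset.sum_congr rfl fun s hs => ?_
    rw [cpow_eq_muw cinf hcinf, hterm s, (Finset.mem_filter.1 hs).2]; ring
  rw [h1, h2, hbal yc]

lemma muw_continuous (hcinf : ∀ i, 0 < cinf i) (yc : Fin N → ℕ) :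
    Continuous (fun c : Fin N → ℝ => muw cinf c yc) := by
  unfold muw
  exact continuous_finset_prod _ fun i _ => ((continuous_apply i).div_const _).pow _

lemma dq_continuous (hcinf : ∀ i, 0 < cinf i) :
    Continuous (Dq y y' k cinf) := by
  unfold Dq
  refine continuous_finset_sum _ fun r _ => Continuous.mul continuous_const ?_
  exact ((Real.continuous_sqrt.comp (muw_continuous cinf hcinf (y r))).sub
    (Real.continuous_sqrt.comp (muw_continuous cinf hcinf (y' r)))).pow 2

lemma ent_continuous (hcinf : ∀ i, 0 < cinf i) :
    Continuous (fun c : Fin N → ℝ => Ent c cinf) := by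
  unfold Ent
  refine continuous_finset_sum _ fun i _ => ?_
  have h : (fun c : Fin N → ℝ => c i * Real.log (c i / cinf i) - c i + cinf i) =
      fun c : Fin N → ℝ => cinf i * ((c i / cinf i) * Real.log (c i / cinf i)) - c i + cinf i := by
    funext c
    have : cinf i * ((c i / cinf i) * Real.log (c i / cinf i)) = c i * Real.log (c i / cinf i) := by
      rw [div_mul_eq_mul_div, mul_div_assoc', mul_div_cancel_left₀ _ (hcinf i).ne']
    rw [this]
  rw [h]
  exact ((continuous_const.mul (Real.continuous_mul_log.comp
    ((continuous_apply i).div_const _))).sub (continuous_apply i)).add continuous_const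

end Net2

open scoped RealInnerProductSpace


noncomputable def toE {N : ℕ} (x : Fin N → ℝ) : EuclideanSpace ℝ (Fin N) :=
  (WithLp.equiv 2 (Fin N → ℝ)).symm x

lemma inner_toE {N : ℕ} (x y : Fin N → ℝ) : ⟪toE x, toE y⟫ = ∑ i, x i * y i := by
  simp [toE, PiLp.inner_apply, RCLike.inner_apply]
  exact Finset.sum_congr rfl fun i _ => mul_comm _ _

lemma quad_form_bound {N R : ℕ} (v : Fin R → Fin N → ℝ) (w : Fin R → ℝ) (hw : ∀ r, 0 < w r) :
    ∃ lamW > (0:ℝ), ∀ L δ : Fin N → ℝ,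
      (∀ z : Fin N → ℝ, (∀ r, ∑ i, v r i * z i = 0) → ∑ i, δ i * z i = 0) →
      (∑ i, δ i * L i) ^ 2 * lamW ≤
        (∑ r, w r * (∑ i, v r i * L i) ^ 2) * (∑ i, δ i ^ 2) := by
  classical
  set E := EuclideanSpace ℝ (Fin N)
  set vE : Fin R → E := fun r => toE (v r) with hvE
  set Phi : E → ℝ := fun L => ∑ r, w r * (⟪vE r, L⟫) ^ 2 with hPhi
  set Kw : Submodule ℝ E := ⨅ r, LinearMap.ker ((innerSL ℝ (vE r)) : E →L[ℝ] ℝ).toLinearMap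
    with hKw
  have memKw : ∀ z : E, z ∈ Kw ↔ ∀ r, ⟪vE r, z⟫ = 0 := by
    intro z
    simp [hKw, Submodule.mem_iInf, LinearMap.mem_ker]
  have hPhi_nonneg : ∀ L, 0 ≤ Phi L := fun L =>
    Finset.sum_nonneg fun r _ => mul_nonneg (hw r).le (sq_nonneg _)
  have hPhi_zero : ∀ L : E, Phi L = 0 → L ∈ Kw := by
    intro L hL
    rw [memKw]
    intro r
    have := (Finset.sum_eq_zero_iff_of_nonneg
      (fun r _ => mul_nonneg (hw r).le (sq_nonneg _))).1 hL r (Finset.mem_univ r)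
    rcases mul_eq_zero.1 this with h | h
    · exact absurd h (hw r).ne'
    · exact pow_eq_zero_iff (by norm_num : 2 ≠ 0) |>.1 h
  have hPhi_cont : Continuous Phi := by
    refine continuous_finset_sum _ fun r _ => continuous_const.mul ?_
    exact (continuous_const.inner continuous_id).pow 2
  -- positive lower bound on the orthogonal complement
  have main : ∃ lamW > (0:ℝ), ∀ u ∈ Kwᗮ, lamW * ‖u‖ ^ 2 ≤ Phi u := by
    by_cases hU : ∀ u ∈ Kwᗮ, u = (0 : E)
    · refine ⟨1, one_pos, fun u hu => ?_⟩
      rw [hU u hu]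
      simpa using hPhi_nonneg 0
    · push_neg at hU
      obtain ⟨u0, hu0U, hu0⟩ := hU
      set S : Set E := (Kwᗮ : Set E) ∩ Metric.sphere 0 1 with hS
      have hSne : S.Nonempty := by
        refine ⟨(‖u0‖⁻¹ : ℝ) • u0, Submodule.smul_mem _ _ hu0U, ?_⟩
        simp [mem_sphere_iff_norm]
        exact norm_smul_inv_norm hu0
      have hScpt : IsCompact S := by
        refine Metric.isCompact_of_isClosed_isBounded
          (IsClosed.inter (Submodule.closed_of_finiteDimensional _) Metric.isClosed_sphere)
          (Metric.isBounded_sphere.subset Set.inter_subset_right)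
      obtain ⟨x, hxS, hxmin⟩ := hScpt.exists_isMinOn hSne hPhi_cont.continuousOn
      have hxnorm : ‖x‖ = 1 := by
        have := hxS.2
        simpa [mem_sphere_iff_norm] using this
      have hlam : 0 < Phi x := by
        rcases (hPhi_nonneg x).lt_or_eq with h | h
        · exact h
        · exfalso
          have hxKw : x ∈ Kw := hPhi_zero x h.symm
          have : x = 0 := (Submodule.disjoint_def.1 (Submodule.orthogonal_disjoint Kw)) x hxKw hxS.1
          rw [this] at hxnorm
          simp at hxnorm
      refine ⟨Phi x, hlam, fun u huU => ?_⟩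
      rcases eq_or_ne u 0 with rfl | hu
      · simpa using hPhi_nonneg 0
      · have hmem : (‖u‖⁻¹ : ℝ) • u ∈ S :=
          ⟨Submodule.smul_mem _ _ huU, by
            simp [mem_sphere_iff_norm]; exact norm_smul_inv_norm hu⟩
        have hmin : Phi x ≤ Phi ((‖u‖⁻¹ : ℝ) • u) := hxmin hmem
        have hPhi_smul : Phi ((‖u‖⁻¹ : ℝ) • u) = (‖u‖⁻¹) ^ 2 * Phi u := by
          simp only [hPhi, real_inner_smul_right, Finset.mul_sum]
          exact Finset.sum_congr rfl fun r _ => by ring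
        rw [hPhi_smul] at hmin
        have hnu : (0:ℝ) < ‖u‖ := norm_pos_iff.2 hu
        have h2 := mul_le_mul_of_nonneg_left hmin (by positivity : (0:ℝ) ≤ ‖u‖ ^ 2)
        calc Phi x * ‖u‖ ^ 2 = ‖u‖ ^ 2 * Phi x := by ring
          _ ≤ ‖u‖ ^ 2 * ((‖u‖⁻¹) ^ 2 * Phi u) := h2
          _ = Phi u := by
              field_simp
  obtain ⟨lamW, hlamW, hbound⟩ := main
  refine ⟨lamW, hlamW, fun L δ hδ => ?_⟩
  set LE : E := toE L
  set δE : E := toE δ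
  have hδU : δE ∈ Kwᗮ := by
    rw [Submodule.mem_orthogonal]
    intro z hz
    have hz' : ∀ r, ∑ i, v r i * z i = 0 := by
      intro r
      have := (memKw z).1 hz r
      rwa [show vE r = toE (v r) from rfl, show ⟪toE (v r), z⟫ = ∑ i, v r i * z i from
        inner_toE (v r) (fun i => z i)] at this
    have := hδ (fun i => z i) hz'
    rw [show (⟪z, δE⟫:ℝ) = ∑ i, z i * δ i from inner_toE (fun i => z i) δ]
    rw [← this]
    exact Finset.sum_congr rfl fun i _ => mul_comm _ _
  obtain ⟨kk, hkk, uu, huu, heq⟩ := Submodule.exists_add_mem_mem_orthogonal (K := Kw) LE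
  have hPhiL : Phi LE = Phi uu := by
    refine Finset.sum_congr rfl fun r _ => ?_
    have : ⟪vE r, LE⟫ = ⟪vE r, uu⟫ := by
      rw [heq, inner_add_right, (memKw kk).1 hkk r, zero_add]
    rw [this]
  have hinnL : ⟪δE, LE⟫ = ⟪δE, uu⟫ := by
    rw [heq, inner_add_right]
    have h0 : (⟪kk, δE⟫:ℝ) = 0 := (Submodule.mem_orthogonal _ _).1 hδU kk hkk
    have h0' : (⟪δE, kk⟫:ℝ) = 0 := by rw [real_inner_comm]; exact h0
    rw [h0', zero_add]
  have hCS : (⟪δE, uu⟫:ℝ) ^ 2 ≤ ‖δE‖ ^ 2 * ‖uu‖ ^ 2 := by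
    have := abs_real_inner_le_norm δE uu
    nlinarith [abs_nonneg (⟪δE, uu⟫:ℝ), sq_abs (⟪δE, uu⟫:ℝ), norm_nonneg δE, norm_nonneg uu]
  have hchain : (⟪δE, LE⟫:ℝ) ^ 2 * lamW ≤ Phi LE * ‖δE‖ ^ 2 := by
    rw [hinnL, hPhiL]
    have h1 := hbound uu huu
    calc (⟪δE, uu⟫:ℝ) ^ 2 * lamW ≤ (‖δE‖ ^ 2 * ‖uu‖ ^ 2) * lamW :=
          mul_le_mul_of_nonneg_right hCS hlamW.le
      _ = (lamW * ‖uu‖ ^ 2) * ‖δE‖ ^ 2 := by ring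
      _ ≤ Phi uu * ‖δE‖ ^ 2 := mul_le_mul_of_nonneg_right h1 (sq_nonneg _)
  have e1 : (⟪δE, LE⟫:ℝ) = ∑ i, δ i * L i := inner_toE δ L
  have e2 : Phi LE = ∑ r, w r * (∑ i, v r i * L i) ^ 2 := by
    refine Finset.sum_congr rfl fun r _ => ?_
    rw [show (⟪vE r, LE⟫:ℝ) = ∑ i, v r i * L i from inner_toE (v r) L]
  have e3 : ‖δE‖ ^ 2 = ∑ i, δ i ^ 2 := by
    rw [← real_inner_self_eq_norm_sq]
    rw [show (⟪δE, δE⟫:ℝ) = ∑ i, δ i * δ i from inner_toE δ δ]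
    exact Finset.sum_congr rfl fun i _ => (sq (δ i)).symm
  rw [e1, e2, e3] at hchain
  exact hchain


section EEP
variable {N R m : ℕ} [NeZero N]
variable (y y' : Fin R → Fin N → ℕ) (k : Fin R → ℝ)
variable (Q : Matrix (Fin m) (Fin N) ℝ) (M : Fin m → ℝ) (cinf : Fin N → ℝ)

lemma combine_arith {S2 SL Phi lamW M0 Cmin E Dqv e4 : ℝ} (hS2pos : 0 < S2)
    (hM0 : 0 < M0) (hCmin : 0 < Cmin) (hlamW : 0 < lamW) (he4 : 0 < e4)
    (h1 : S2 ≤ M0 * SL) (h2 : SL ^ 2 * lamW ≤ Phi * S2) (hE : E ≤ S2 / Cmin)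
    (hEnn : 0 ≤ E) (hF4 : e4 * Phi ≤ Dqv) :
    e4 * lamW / M0 ^ 2 * Cmin * E ≤ Dqv := by
  have hSL : S2 / M0 ≤ SL := by
    rw [div_le_iff₀ hM0]
    nlinarith
  have hSLpos : 0 < SL := by nlinarith
  have h3 : S2 ^ 2 / M0 ^ 2 ≤ SL ^ 2 := by
    rw [← div_pow]
    exact pow_le_pow_left₀ (by positivity) hSL 2
  have h4 : S2 * lamW / M0 ^ 2 ≤ Phi := by
    rw [div_le_iff₀ (pow_pos hM0 2)]
    have h3' := mul_le_mul_of_nonneg_right h3 hlamW.le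
    have h5 := le_trans h3' h2
    have h6 := mul_le_mul_of_nonneg_right h5 (pow_pos hM0 2).le
    have e := div_mul_cancel₀ (S2 ^ 2) (pow_ne_zero 2 hM0.ne')
    nlinarith [e, h6, hS2pos]
  have hstep : e4 * lamW / M0 ^ 2 * Cmin * E ≤ e4 * lamW / M0 ^ 2 * Cmin * (S2 / Cmin) := by
    apply mul_le_mul_of_nonneg_left hE
    positivity
  have heq : e4 * lamW / M0 ^ 2 * Cmin * (S2 / Cmin) = e4 * (S2 * lamW / M0 ^ 2) := by
    field_simp
  calc e4 * lamW / M0 ^ 2 * Cmin * E ≤ e4 * (S2 * lamW / M0 ^ 2) := by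
        rw [← heq]; exact hstep
    _ ≤ e4 * Phi := mul_le_mul_of_nonneg_left h4 he4.le
    _ ≤ Dqv := hF4

/-- local entropy–entropy production estimate near the equilibrium. -/
lemma local_eep (hk : ∀ r, 0 < k r) (hcinf : ∀ i, 0 < cinf i)
    (hQspan : ∀ v : Fin N → ℝ, (∀ r, ∑ i, ((y' r i : ℝ) - (y r i : ℝ)) * v i = 0) →
      v ∈ Submodule.span ℝ (Set.range fun j => Q j))
    (hQcinf : Q.mulVec cinf = M) :
    ∃ lam1 > (0:ℝ), ∀ c : Fin N → ℝ, (∀ i, 0 < c i) →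
      (∀ i, |c i - cinf i| ≤ cinf i / 2) → Q.mulVec c = M →
      lam1 * Ent c cinf ≤ Dq y y' k cinf c := by
  classical
  haveI : Nonempty (Fin N) := ⟨⟨0, Nat.pos_of_ne_zero (NeZero.ne N)⟩⟩
  obtain ⟨lamW, hlamW, hquad⟩ := quad_form_bound
    (fun r i => (y' r i : ℝ) - (y r i : ℝ))
    (fun r => k r * cpow cinf (y r))
    (fun r => mul_pos (hk r) (cpow_pos hcinf (y r)))
  set Cmax : ℝ := Finset.univ.sup' Finset.univ_nonempty cinf with hCmax_def
  set Cmin : ℝ := Finset.univ.inf' Finset.univ_nonempty cinf with hCmin_def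
  have hCmax : ∀ i, cinf i ≤ Cmax := fun i => Finset.le_sup' cinf (Finset.mem_univ i)
  have hCmin : ∀ i, Cmin ≤ cinf i := fun i => Finset.inf'_le cinf (Finset.mem_univ i)
  have hCminpos : 0 < Cmin := by
    rw [hCmin_def, Finset.lt_inf'_iff]
    exact fun i _ => hcinf i
  have hCmaxpos : 0 < Cmax := lt_of_lt_of_le (hcinf (Classical.arbitrary _)) (hCmax _)
  set M0 : ℝ := 3 / 2 * Cmax with hM0_def
  have hM0pos : 0 < M0 := by positivity
  set B : ℝ := (∑ r, ∑ i, ((y r i : ℝ) + (y' r i : ℝ))) * Real.log 2 with hB_def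
  have hBnonneg : 0 ≤ B := by
    apply mul_nonneg
    · exact Finset.sum_nonneg fun r _ => Finset.sum_nonneg fun i _ => by positivity
    · exact Real.log_nonneg (by norm_num)
  set lam1 : ℝ := Real.exp (-(2 * B)) / 4 * lamW / M0 ^ 2 * Cmin with hlam1_def
  have hlam1pos : 0 < lam1 :=
    mul_pos (div_pos (mul_pos (div_pos (Real.exp_pos _) (by norm_num)) hlamW)
      (pow_pos hM0pos 2)) hCminpos
  refine ⟨lam1, hlam1pos, fun c hc hnear hQc => ?_⟩
  set δ : Fin N → ℝ := fun i => c i - cinf i with hδ_def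
  set L : Fin N → ℝ := fun i => Real.log (c i / cinf i) with hL_def
  have hlow : ∀ i, cinf i / 2 ≤ c i := by
    intro i
    have := abs_le.1 (hnear i)
    have h1 := this.1
    linarith
  have hhigh : ∀ i, c i ≤ 3 / 2 * cinf i := by
    intro i
    have := abs_le.1 (hnear i)
    have h2 := this.2
    linarith
  have hLabs : ∀ i, |L i| ≤ Real.log 2 := by
    intro i
    rw [abs_le]
    constructor
    · have h1 : (1:ℝ)/2 ≤ c i / cinf i := by
        rw [le_div_iff₀ (hcinf i)]
        linarith [hlow i]
      have h2 := Real.log_le_log (by norm_num) h1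
      rw [show ((1:ℝ)/2) = 2⁻¹ by norm_num, Real.log_inv] at h2
      exact h2
    · have h1 : c i / cinf i ≤ 2 := by
        rw [div_le_iff₀ (hcinf i)]
        nlinarith [hhigh i, hcinf i]
      exact Real.log_le_log (div_pos (hc i) (hcinf i)) h1
  -- δ is orthogonal to every vector in ker W
  have hδorth : ∀ z : Fin N → ℝ,
      (∀ r, ∑ i, ((y' r i : ℝ) - (y r i : ℝ)) * z i = 0) → ∑ i, δ i * z i = 0 := by
    intro z hz
    have hmem := hQspan z hz
    have hrow : ∀ j, ∑ i, δ i * Q j i = 0 := by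
      intro j
      have h1 : Q.mulVec c j = Q.mulVec cinf j := by rw [hQc, hQcinf]
      have h2 : Q.mulVec c j - Q.mulVec cinf j = ∑ i, δ i * Q j i := by
        simp only [Matrix.mulVec, dotProduct, hδ_def]
        rw [← Finset.sum_sub_distrib]
        exact Finset.sum_congr rfl fun i _ => by ring
      rw [h1, sub_self] at h2
      exact h2.symm
    set φ : (Fin N → ℝ) →ₗ[ℝ] ℝ :=
      { toFun := fun u => ∑ i, δ i * u i
        map_add' := fun u w => by
          rw [← Finset.sum_add_distrib]
          exact Finset.sum_congr rfl fun i _ => by simp [Pi.add_apply]; ring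
        map_smul' := fun a u => by
          simp only [RingHom.id_apply, smul_eq_mul, Finset.mul_sum]
          exact Finset.sum_congr rfl fun i _ => by simp [smul_eq_mul]; ring } with hφ_def
    have hsub : Submodule.span ℝ (Set.range fun j => Q j) ≤ LinearMap.ker φ := by
      rw [Submodule.span_le]
      rintro v ⟨j, rfl⟩
      exact hrow j
    exact hsub hmem
  have hF2 : ∀ i, δ i ^ 2 ≤ M0 * (δ i * L i) := by
    intro i
    exact sq_le_mul_log (hc i) (hcinf i)
      (le_trans (hhigh i) (by nlinarith [hCmax i] : 3/2 * cinf i ≤ M0))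
      (le_trans (hCmax i) (by nlinarith : Cmax ≤ M0))
  have hF2sum : ∑ i, δ i ^ 2 ≤ M0 * ∑ i, δ i * L i := by
    rw [Finset.mul_sum]
    exact Finset.sum_le_sum fun i _ => hF2 i
  have hS2nonneg : 0 ≤ ∑ i, δ i ^ 2 :=
    Finset.sum_nonneg fun i _ => sq_nonneg (δ i)
  have hδLnonneg : 0 ≤ ∑ i, δ i * L i := by nlinarith
  -- (F4): Dq dominates the weighted quadratic form of L
  have hF4 : Real.exp (-(2 * B)) / 4 *
      (∑ r, k r * cpow cinf (y r) * (∑ i, ((y' r i : ℝ) - (y r i : ℝ)) * L i) ^ 2)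
      ≤ Dq y y' k cinf c := by
    unfold Dq
    rw [Finset.mul_sum]
    refine Finset.sum_le_sum fun r _ => ?_
    have hκ : 0 ≤ k r * cpow cinf (y r) := (mul_pos (hk r) (cpow_pos hcinf (y r))).le
    have habs : ∀ yc : Fin N → ℕ, (∀ i, (yc i : ℝ) ≤ (y r i : ℝ) + (y' r i : ℝ)) →
        |(∑ i, (yc i : ℝ) * L i) / 2| ≤ B := by
      intro yc hyc
      have h1 : |∑ i, (yc i : ℝ) * L i| ≤ ∑ i, (yc i : ℝ) * Real.log 2 := by
        refine le_trans (Finset.abs_sum_le_sum_abs _ _) (Finset.sum_le_sum fun i _ => ?_)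
        rw [abs_mul, Nat.abs_cast]
        exact mul_le_mul_of_nonneg_left (hLabs i) (Nat.cast_nonneg _)
      have h2 : ∑ i, (yc i : ℝ) * Real.log 2 ≤ B := by
        have hr : (∑ i, ((y r i : ℝ) + (y' r i : ℝ))) * Real.log 2 ≤
            ∑ r', (∑ i, ((y r' i : ℝ) + (y' r' i : ℝ))) * Real.log 2 := by
          refine Finset.single_le_sum
            (f := fun r' => (∑ i, ((y r' i : ℝ) + (y' r' i : ℝ))) * Real.log 2)
            (fun r' _ => ?_) (Finset.mem_univ r)
          apply mul_nonneg
          · exact Finset.sum_nonneg fun i _ => by positivity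
          · exact Real.log_nonneg (by norm_num)
        have ha : ∑ i, (yc i : ℝ) * Real.log 2 ≤
            (∑ i, ((y r i : ℝ) + (y' r i : ℝ))) * Real.log 2 := by
          rw [Finset.sum_mul]
          exact Finset.sum_le_sum fun i _ =>
            mul_le_mul_of_nonneg_right (hyc i) (Real.log_nonneg (by norm_num))
        have hb : (∑ r', (∑ i, ((y r' i : ℝ) + (y' r' i : ℝ))) * Real.log 2) = B := by
          rw [hB_def, Finset.sum_mul]
        exact le_trans ha (hb ▸ hr)
      calc |(∑ i, (yc i : ℝ) * L i) / 2| = |∑ i, (yc i : ℝ) * L i| / 2 := by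
            rw [abs_div, abs_of_nonneg (by norm_num : (0:ℝ) ≤ 2)]
        _ ≤ B := by
            have := le_trans h1 h2
            linarith [abs_nonneg (∑ i, (yc i : ℝ) * L i)]
    have hsqrt : ∀ yc : Fin N → ℕ,
        Real.sqrt (muw cinf c yc) = Real.exp ((∑ i, (yc i : ℝ) * L i) / 2) := by
      intro yc
      have hmupos := muw_pos cinf hc hcinf yc
      rw [← Real.exp_log (Real.sqrt_pos.2 hmupos), Real.log_sqrt hmupos.le,
        log_muw cinf hc hcinf]
    set p : ℝ := (∑ i, (y r i : ℝ) * L i) / 2 with hp_def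
    set q : ℝ := (∑ i, (y' r i : ℝ) * L i) / 2 with hq_def
    have hp : |p| ≤ B := habs (y r) (fun i => by
      have : (0:ℝ) ≤ (y' r i : ℝ) := Nat.cast_nonneg _
      linarith)
    have hq : |q| ≤ B := habs (y' r) (fun i => by
      have : (0:ℝ) ≤ (y r i : ℝ) := Nat.cast_nonneg _
      linarith)
    have hexp := exp_sub_exp_lb hp hq
    have hsq : Real.exp (-(2*B)) * (p - q) ^ 2 ≤ (Real.exp p - Real.exp q) ^ 2 := by
      have h1 := mul_self_le_mul_self (by positivity) hexp
      calc Real.exp (-(2*B)) * (p - q) ^ 2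
          = (Real.exp (-B) * |p - q|) * (Real.exp (-B) * |p - q|) := by
            rw [show -(2*B) = -B + -B by ring, Real.exp_add]
            rw [show (Real.exp (-B) * |p-q|) * (Real.exp (-B) * |p-q|)
              = Real.exp (-B) * Real.exp (-B) * (|p-q| * |p-q|) by ring,
              abs_mul_abs_self]
            ring
        _ ≤ |Real.exp p - Real.exp q| * |Real.exp p - Real.exp q| := h1
        _ = (Real.exp p - Real.exp q) ^ 2 := by rw [abs_mul_abs_self]; ring
    have hpq : p - q = -(∑ i, ((y' r i : ℝ) - (y r i : ℝ)) * L i) / 2 := by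
      rw [hp_def, hq_def, div_sub_div_same, ← Finset.sum_sub_distrib,
        ← Finset.sum_neg_distrib]
      congr 1
      exact Finset.sum_congr rfl fun i _ => by ring
    rw [hsqrt (y r), hsqrt (y' r), ← hp_def, ← hq_def]
    have heq2 : (p - q) ^ 2 = (∑ i, ((y' r i : ℝ) - (y r i : ℝ)) * L i) ^ 2 / 4 := by
      rw [hpq]; ring
    calc Real.exp (-(2 * B)) / 4 *
          (k r * cpow cinf (y r) * (∑ i, ((y' r i : ℝ) - (y r i : ℝ)) * L i) ^ 2)
        = k r * cpow cinf (y r) * (Real.exp (-(2*B)) * (p - q) ^ 2) := by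
          rw [heq2]; ring
      _ ≤ k r * cpow cinf (y r) * (Real.exp p - Real.exp q) ^ 2 :=
          mul_le_mul_of_nonneg_left hsq hκ
  -- (F5)
  have hEnt : Ent c cinf ≤ (∑ i, δ i ^ 2) / Cmin := by
    rw [ent_eq_psi, Finset.sum_div]
    refine Finset.sum_le_sum fun i _ => ?_
    refine le_trans (psi_le_sq_div (hc i).le (hcinf i)) ?_
    exact div_le_div_of_nonneg_left (sq_nonneg _) hCminpos (hCmin i)
  -- combine
  rcases eq_or_lt_of_le hS2nonneg with hS2 | hS2pos
  · have hEnt0 : Ent c cinf = 0 := by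
      have h1 := ent_nonneg cinf hcinf (fun i => (hc i).le)
      have h2 : Ent c cinf ≤ 0 := by
        rw [← hS2] at hEnt
        simpa using hEnt
      linarith
    rw [hEnt0, mul_zero]
    exact dq_nonneg y y' k cinf hk hcinf c
  · have hquadc := hquad L δ hδorth
    exact combine_arith hS2pos hM0pos hCminpos hlamW (by positivity) hF2sum hquadc hEnt
      (ent_nonneg cinf hcinf (fun i => (hc i).le)) hF4

end EEP

section EEP2
variable {N R m : ℕ} [NeZero N]
variable (y y' : Fin R → Fin N → ℕ) (k : Fin R → ℝ)
variable (Q : Matrix (Fin m) (Fin N) ℝ) (M : Fin m → ℝ) (cinf : Fin N → ℝ)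

lemma dq_zero_eq_cinf (hk : ∀ r, 0 < k r) (hcinf : ∀ i, 0 < cinf i)
    (hbal : IsComplexBalanced y y' k cinf)
    (huniq : ∀ z : Fin N → ℝ, (∀ i, 0 < z i) → Q.mulVec z = M →
      IsComplexBalanced y y' k z → z = cinf)
    (hnobd : ∀ z : Fin N → ℝ, (∀ i, 0 ≤ z i) → (∃ i, z i = 0) → Q.mulVec z = M →
      ¬ IsComplexBalanced y y' k z)
    {c : Fin N → ℝ} (hc : ∀ i, 0 ≤ c i) (hQc : Q.mulVec c = M)
    (hDq : Dq y y' k cinf c = 0) : c = cinf := by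
  have hcb := dq_zero_balanced y y' k cinf hk hcinf hbal hc hDq
  by_cases hpos : ∀ i, 0 < c i
  · exact huniq c hpos hQc hcb
  · push_neg at hpos
    obtain ⟨i, hi⟩ := hpos
    exact absurd hcb (hnobd c hc ⟨i, le_antisymm hi (hc i)⟩ hQc)

/-- full entropy–entropy production inequality on the invariant region. -/
lemma eep (hk : ∀ r, 0 < k r) (hcinf : ∀ i, 0 < cinf i)
    (hbal : IsComplexBalanced y y' k cinf)
    (hQspan : ∀ v : Fin N → ℝ, (∀ r, ∑ i, ((y' r i : ℝ) - (y r i : ℝ)) * v i = 0) →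
      v ∈ Submodule.span ℝ (Set.range fun j => Q j))
    (hQcinf : Q.mulVec cinf = M)
    (huniq : ∀ z : Fin N → ℝ, (∀ i, 0 < z i) → Q.mulVec z = M →
      IsComplexBalanced y y' k z → z = cinf)
    (hnobd : ∀ z : Fin N → ℝ, (∀ i, 0 ≤ z i) → (∃ i, z i = 0) → Q.mulVec z = M →
      ¬ IsComplexBalanced y y' k z)
    (K : ℝ) (hK : 0 < K) :
    ∃ lam > (0:ℝ), ∀ c : Fin N → ℝ, (∀ i, 0 < c i) → Q.mulVec c = M →
      Ent c cinf ≤ K → lam * Ent c cinf ≤ Dq y y' k cinf c := by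
  classical
  haveI : Nonempty (Fin N) := ⟨⟨0, Nat.pos_of_ne_zero (NeZero.ne N)⟩⟩
  obtain ⟨lam1, hlam1, hloc⟩ := local_eep y y' k Q M cinf hk hcinf hQspan hQcinf
  set A : Set (Fin N → ℝ) := {c | (∀ i, 0 ≤ c i) ∧ Q.mulVec c = M ∧ Ent c cinf ≤ K ∧
    ∃ i, cinf i / 2 ≤ |c i - cinf i|} with hA_def
  have hAcl : IsClosed A := by
    have h1 : IsClosed {c : Fin N → ℝ | ∀ i, 0 ≤ c i} := by
      rw [Set.setOf_forall]
      exact isClosed_iInter fun i => isClosed_le continuous_const (continuous_apply i)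
    have h2 : IsClosed {c : Fin N → ℝ | Q.mulVec c = M} := by
      have : {c : Fin N → ℝ | Q.mulVec c = M} = ⋂ j, {c | Q.mulVec c j = M j} := by
        ext c
        simp [funext_iff, Set.mem_iInter]
      rw [this]
      refine isClosed_iInter fun j => isClosed_eq ?_ continuous_const
      have hmv : (fun c : Fin N → ℝ => Q.mulVec c j) = fun c => ∑ i, Q j i * c i := by
        funext c
        simp [Matrix.mulVec, dotProduct]
      rw [hmv]
      exact continuous_finset_sum _ fun i _ => continuous_const.mul (continuous_apply i)
    have h3 : IsClosed {c : Fin N → ℝ | Ent c cinf ≤ K} :=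
      isClosed_le (ent_continuous cinf hcinf) continuous_const
    have h4 : IsClosed {c : Fin N → ℝ | ∃ i, cinf i / 2 ≤ |c i - cinf i|} := by
      rw [Set.setOf_exists]
      refine isClosed_iUnion_of_finite fun i => isClosed_le continuous_const ?_
      exact ((continuous_apply i).sub continuous_const).abs
    have : A = {c : Fin N → ℝ | ∀ i, 0 ≤ c i} ∩ ({c | Q.mulVec c = M} ∩
        ({c | Ent c cinf ≤ K} ∩ {c | ∃ i, cinf i / 2 ≤ |c i - cinf i|})) := by
      ext c
      exact Iff.rfl
    rw [this]
    exact h1.inter (h2.inter (h3.inter h4))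
  set Cs : ℝ := ∑ i, cinf i with hCs_def
  have hCsnn : 0 ≤ Cs := Finset.sum_nonneg fun i _ => (hcinf i).le
  have hAbd : Bornology.IsBounded A := by
    refine (Metric.isBounded_closedBall (x := (0 : Fin N → ℝ)) (r := 2 * K + 2 * Cs)).subset ?_
    intro c hcA
    obtain ⟨hc0, _, hcK, _⟩ := hcA
    rw [Metric.mem_closedBall, dist_zero_right]
    have hub : ∀ i, ‖c i‖ ≤ 2 * K + 2 * Cs := by
      intro i
      have hpsii : Psi (c i) (cinf i) ≤ Ent c cinf := by
        rw [ent_eq_psi]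
        refine Finset.single_le_sum (fun j _ => psi_nonneg (hc0 j) (hcinf j)) (Finset.mem_univ i)
      have h2 := le_two_psi (hc0 i) (hcinf i)
      have h3 : cinf i ≤ Cs :=
        Finset.single_le_sum (fun j (_ : j ∈ Finset.univ) => (hcinf j).le) (Finset.mem_univ i)
      rw [Real.norm_eq_abs, abs_of_nonneg (hc0 i)]
      linarith
    exact pi_norm_le_iff_of_nonneg (by positivity) |>.2 hub
  have hAcomp : IsCompact A := Metric.isCompact_of_isClosed_isBounded hAcl hAbd
  by_cases hAne : A.Nonempty
  · obtain ⟨x, hxA, hxmin⟩ :=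
      hAcomp.exists_isMinOn hAne (dq_continuous y y' k cinf hcinf).continuousOn
    have hDqx : 0 < Dq y y' k cinf x := by
      rcases (dq_nonneg y y' k cinf hk hcinf x).lt_or_eq with h | h
      · exact h
      · exfalso
        obtain ⟨hx0, hxQM, _, i, hxi⟩ := hxA
        have := dq_zero_eq_cinf y y' k Q M cinf hk hcinf hbal huniq hnobd hx0 hxQM h.symm
        rw [this] at hxi
        simp at hxi
        nlinarith [hcinf i]
    refine ⟨min lam1 (Dq y y' k cinf x / K), lt_min hlam1 (div_pos hDqx hK), ?_⟩
    intro c hc hQc hEK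
    have hEnn := ent_nonneg cinf hcinf (fun i => (hc i).le)
    by_cases hnear : ∀ i, |c i - cinf i| ≤ cinf i / 2
    · calc min lam1 (Dq y y' k cinf x / K) * Ent c cinf ≤ lam1 * Ent c cinf :=
            mul_le_mul_of_nonneg_right (min_le_left _ _) hEnn
        _ ≤ Dq y y' k cinf c := hloc c hc hnear hQc
    · push_neg at hnear
      obtain ⟨i, hi⟩ := hnear
      have hcA : c ∈ A := ⟨fun i => (hc i).le, hQc, hEK, ⟨i, hi.le⟩⟩
      have hmin := hxmin hcA
      calc min lam1 (Dq y y' k cinf x / K) * Ent c cinf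
          ≤ Dq y y' k cinf x / K * Ent c cinf :=
            mul_le_mul_of_nonneg_right (min_le_right _ _) hEnn
        _ ≤ Dq y y' k cinf x / K * K :=
            mul_le_mul_of_nonneg_left hEK (by positivity)
        _ = Dq y y' k cinf x := div_mul_cancel₀ _ hK.ne'
        _ ≤ Dq y y' k cinf c := hmin
  · refine ⟨lam1, hlam1, fun c hc hQc hEK => ?_⟩
    by_cases hnear : ∀ i, |c i - cinf i| ≤ cinf i / 2
    · exact hloc c hc hnear hQc
    · exfalso
      push_neg at hnear
      obtain ⟨i, hi⟩ := hnear
      exact hAne ⟨c, fun i => (hc i).le, hQc, hEK, ⟨i, hi.le⟩⟩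

end EEP2

section Traj
variable {N R : ℕ}

/-- if `f' ≤ 0` on `[0, ∞)` then `f` is nonincreasing there. -/
lemma nonincreasing_of_deriv_nonpos {f f' : ℝ → ℝ}
    (hderiv : ∀ t, 0 ≤ t → HasDerivAt f (f' t) t)
    (hle : ∀ t, 0 ≤ t → f' t ≤ 0) :
    ∀ t, 0 ≤ t → f t ≤ f 0 := by
  have hanti : AntitoneOn f (Set.Ici (0:ℝ)) := by
    refine antitoneOn_of_deriv_nonpos (convex_Ici 0)
      (fun t ht => (hderiv t ht).continuousAt.continuousWithinAt) ?_ ?_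
    · rw [interior_Ici]
      exact fun t ht => ((hderiv t (le_of_lt ht)).differentiableAt).differentiableWithinAt
    · rw [interior_Ici]
      intro t ht
      rw [(hderiv t (le_of_lt ht)).deriv]
      exact hle t (le_of_lt ht)
  exact fun t ht => hanti (Set.self_mem_Ici) ht ht

lemma const_of_deriv_zero {f : ℝ → ℝ}
    (hderiv : ∀ t, 0 ≤ t → HasDerivAt f 0 t) :
    ∀ t, 0 ≤ t → f t = f 0 := by
  intro t ht
  have h1 := nonincreasing_of_deriv_nonpos hderiv (fun _ _ => le_refl 0) t ht
  have h2 := nonincreasing_of_deriv_nonpos (f := fun s => -f s) (f' := fun _ => 0)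
    (fun s hs => by have h := (hderiv s hs).neg; rw [neg_zero] at h; exact h) (fun _ _ => le_refl 0) t ht
  simp at h2
  linarith

variable (y y' : Fin R → Fin N → ℕ) (k : Fin R → ℝ) (cinf : Fin N → ℝ)

/-- derivative of the relative entropy along a trajectory. -/
lemma ent_hasDerivAt (hcinf : ∀ i, 0 < cinf i) (hbal : IsComplexBalanced y y' k cinf)
    {c : ℝ → Fin N → ℝ} {t : ℝ}
    (hderiv : HasDerivAt c (Rvec y y' k (c t)) t)
    (hpos : ∀ i, 0 < c t i) :
    HasDerivAt (fun s => Ent (c s) cinf) (-Dent y y' k cinf (c t)) t := by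
  have hcomp : ∀ i, HasDerivAt (fun s => c s i) (Rvec y y' k (c t) i) t :=
    fun i => (hasDerivAt_pi.1 hderiv) i
  have hphi : ∀ i, HasDerivAt
      (fun x : ℝ => x * Real.log (x / cinf i) - x + cinf i)
      (Real.log (c t i / cinf i)) (c t i) := by
    intro i
    have hx := hpos i
    have hg : HasDerivAt
        (fun x : ℝ => x * (Real.log x - Real.log (cinf i)) - x + cinf i)
        (Real.log (c t i) - Real.log (cinf i)) (c t i) := by
      have h1 : HasDerivAt (fun x : ℝ => x * (Real.log x - Real.log (cinf i)))
          (1 * (Real.log (c t i) - Real.log (cinf i)) + c t i * (c t i)⁻¹) (c t i) :=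
        (hasDerivAt_id (c t i)).mul ((Real.hasDerivAt_log hx.ne').sub_const _)
      have h2 := (h1.sub (hasDerivAt_id (c t i))).add_const (cinf i)
      have : 1 * (Real.log (c t i) - Real.log (cinf i)) + c t i * (c t i)⁻¹ - 1 =
          Real.log (c t i) - Real.log (cinf i) := by
        rw [mul_inv_cancel₀ hx.ne']
        ring
      rw [this] at h2
      exact h2
    have heq : (fun x : ℝ => x * Real.log (x / cinf i) - x + cinf i) =ᶠ[nhds (c t i)]
        (fun x : ℝ => x * (Real.log x - Real.log (cinf i)) - x + cinf i) := by
      refine Filter.eventuallyEq_of_mem (Ioi_mem_nhds hx) fun x hx' => ?_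
      have : (0:ℝ) < x := hx'
      rw [Real.log_div this.ne' (hcinf i).ne']
    have := hg.congr_of_eventuallyEq heq
    rwa [Real.log_div hx.ne' (hcinf i).ne']
  have hsum : HasDerivAt (fun s => Ent (c s) cinf)
      (∑ i, Real.log (c t i / cinf i) * Rvec y y' k (c t) i) t := by
    have : ∀ i ∈ Finset.univ, HasDerivAt
        (fun s => c s i * Real.log (c s i / cinf i) - c s i + cinf i)
        (Real.log (c t i / cinf i) * Rvec y y' k (c t) i) t := by
      intro i _
      exact (hphi i).comp t (hcomp i)
    exact HasDerivAt.fun_sum this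
  rwa [eprod_eq y y' k cinf hbal hcinf hpos] at hsum

/-- conservation of the linear invariants. -/
lemma conservation {m : ℕ} (Q : Matrix (Fin m) (Fin N) ℝ)
    (hQker : ∀ j r, ∑ i, ((y' r i : ℝ) - (y r i : ℝ)) * Q j i = 0)
    {c : ℝ → Fin N → ℝ}
    (hderiv : ∀ t, 0 ≤ t → HasDerivAt c (Rvec y y' k (c t)) t)
    {t : ℝ} (ht : 0 ≤ t) :
    Q.mulVec (c t) = Q.mulVec (c 0) := by
  funext j
  have hval : ∀ s, 0 ≤ s → HasDerivAt (fun u => ∑ i, Q j i * c u i) 0 s := by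
    intro s hs
    have hcomp : ∀ i, HasDerivAt (fun u => c u i) (Rvec y y' k (c s) i) s :=
      fun i => (hasDerivAt_pi.1 (hderiv s hs)) i
    have h1 : HasDerivAt (fun u => ∑ i, Q j i * c u i)
        (∑ i, Q j i * Rvec y y' k (c s) i) s :=
      HasDerivAt.fun_sum fun i _ => (hcomp i).const_mul (Q j i)
    have h2 : ∑ i, Q j i * Rvec y y' k (c s) i = 0 := by
      unfold Rvec
      rw [show ∑ i, Q j i * ∑ r, k r * cpow (c s) (y r) * ((y' r i : ℝ) - (y r i : ℝ))
          = ∑ r, k r * cpow (c s) (y r) *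
            (∑ i, ((y' r i : ℝ) - (y r i : ℝ)) * Q j i) by
        simp only [Finset.mul_sum]
        rw [Finset.sum_comm]
        exact Finset.sum_congr rfl fun r _ => Finset.sum_congr rfl fun i _ => by ring]
      rw [Finset.sum_congr rfl fun r (_ : r ∈ Finset.univ) => by rw [hQker j r, mul_zero]]
      exact Finset.sum_const_zero
    rwa [h2] at h1
  have := const_of_deriv_zero hval t ht
  simp only [Matrix.mulVec, dotProduct]
  exact this

end Traj


theorem ode_exponential_convergence {N R m : ℕ} [NeZero N]
    (y y' : Fin R → Fin N → ℕ) (k : Fin R → ℝ) (hk : ∀ r, 0 < k r)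
    (Q : Matrix (Fin m) (Fin N) ℝ) (hQrank : Q.rank = m)
    (hQker : ∀ j r, ∑ i, ((y' r i : ℝ) - (y r i : ℝ)) * Q j i = 0)
    (hQspan : ∀ v : Fin N → ℝ, (∀ r, ∑ i, ((y' r i : ℝ) - (y r i : ℝ)) * v i = 0) →
      v ∈ Submodule.span ℝ (Set.range fun j => Q j))
    (M : Fin m → ℝ) (hM : ∀ j, 0 < M j)
    (cinf : Fin N → ℝ) (hcinf : ∀ i, 0 < cinf i)
    (hbal : IsComplexBalanced y y' k cinf) (hQcinf : Q.mulVec cinf = M)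
    (huniq : ∀ z : Fin N → ℝ, (∀ i, 0 < z i) → Q.mulVec z = M →
      IsComplexBalanced y y' k z → z = cinf)
    (hnobd : ∀ z : Fin N → ℝ, (∀ i, 0 ≤ z i) → (∃ i, z i = 0) → Q.mulVec z = M →
      ¬ IsComplexBalanced y y' k z)
    (K : ℝ) (hK : 0 < K) :
    ∃ lam > (0 : ℝ), ∀ c : ℝ → Fin N → ℝ,
      (∀ t, 0 ≤ t → HasDerivAt c (Rvec y y' k (c t)) t) →
      (∀ t, 0 ≤ t → ∀ i, 0 < c t i) →
      Q.mulVec (c 0) = M →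
      Ent (c 0) cinf ≤ K →
      ∀ t, 0 < t →
        Ent (c t) cinf ≤ Ent (c 0) cinf * Real.exp (-lam * t) ∧
        ∑ i, |c t i - cinf i| ^ 2 ≤
          (Real.sqrt (2 * (Ent (c 0) cinf + ∑ i, cinf i)) +
              (⨆ i, Real.sqrt (cinf i))) ^ 2 *
            Ent (c 0) cinf * Real.exp (-lam * t) := by
  classical
  obtain ⟨lam0, hlam0, heep⟩ :=
    eep y y' k Q M cinf hk hcinf hbal hQspan hQcinf huniq hnobd K hK
  refine ⟨lam0, hlam0, ?_⟩
  intro c hcderiv hcpos hQc0 hEK t ht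
  have hQct : ∀ s, 0 ≤ s → Q.mulVec (c s) = M := by
    intro s hs
    rw [conservation y y' k Q hQker hcderiv hs, hQc0]
  have hEd : ∀ s, 0 ≤ s → HasDerivAt (fun u => Ent (c u) cinf)
      (-Dent y y' k cinf (c s)) s := fun s hs =>
    ent_hasDerivAt y y' k cinf hcinf hbal (hcderiv s hs) (hcpos s hs)
  have hmono : ∀ s, 0 ≤ s → Ent (c s) cinf ≤ Ent (c 0) cinf := by
    refine nonincreasing_of_deriv_nonpos
      (f' := fun s => -Dent y y' k cinf (c s)) hEd ?_
    intro s hs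
    exact neg_nonpos.2 (dent_nonneg y y' k cinf hk hcinf (hcpos s hs))
  have hEsK : ∀ s, 0 ≤ s → Ent (c s) cinf ≤ K := fun s hs => le_trans (hmono s hs) hEK
  -- Gronwall
  set g : ℝ → ℝ := fun s => Ent (c s) cinf * Real.exp (lam0 * s) with hg_def
  have hgd : ∀ s, 0 ≤ s → HasDerivAt g
      (-Dent y y' k cinf (c s) * Real.exp (lam0 * s) +
        Ent (c s) cinf * (Real.exp (lam0 * s) * lam0)) s := by
    intro s hs
    have hlin : HasDerivAt (fun u : ℝ => lam0 * u) lam0 s := by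
      simpa using (hasDerivAt_id s).const_mul lam0
    exact (hEd s hs).mul hlin.exp
  have hg'le : ∀ s, 0 ≤ s →
      -Dent y y' k cinf (c s) * Real.exp (lam0 * s) +
        Ent (c s) cinf * (Real.exp (lam0 * s) * lam0) ≤ 0 := by
    intro s hs
    have h1 : lam0 * Ent (c s) cinf ≤ Dq y y' k cinf (c s) :=
      heep (c s) (hcpos s hs) (hQct s hs) (hEsK s hs)
    have h2 : Dq y y' k cinf (c s) ≤ Dent y y' k cinf (c s) :=
      dq_le_dent y y' k cinf hk hcinf hbal (hcpos s hs)
    nlinarith [Real.exp_pos (lam0 * s)]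
  have hgt : g t ≤ g 0 := nonincreasing_of_deriv_nonpos hgd hg'le t ht.le
  have hg0 : g 0 = Ent (c 0) cinf := by
    simp [hg_def]
  have hdecay : Ent (c t) cinf ≤ Ent (c 0) cinf * Real.exp (-lam0 * t) := by
    rw [hg0] at hgt
    have h := mul_le_mul_of_nonneg_right hgt (Real.exp_pos (-(lam0 * t))).le
    rw [hg_def] at h
    simp only at h
    rw [mul_assoc, ← Real.exp_add, add_neg_cancel, Real.exp_zero, mul_one] at h
    rw [neg_mul]
    exact h
  refine ⟨hdecay, ?_⟩
  -- Csiszár–Kullback type bound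
  haveI : Nonempty (Fin N) := ⟨⟨0, Nat.pos_of_ne_zero (NeZero.ne N)⟩⟩
  set KT : ℝ := 2 * (Ent (c 0) cinf + ∑ i, cinf i) with hKT_def
  set S : ℝ := ⨆ i, Real.sqrt (cinf i) with hS_def
  have hE0nn : 0 ≤ Ent (c 0) cinf :=
    ent_nonneg cinf hcinf (fun i => (hcpos 0 le_rfl i).le)
  have hKTnn : 0 ≤ KT := by
    rw [hKT_def]
    have : 0 ≤ ∑ i, cinf i := Finset.sum_nonneg fun i _ => (hcinf i).le
    linarith
  have hSnn : 0 ≤ S := by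
    rw [hS_def]
    refine le_ciSup_of_le (Set.Finite.bddAbove (Set.finite_range _))
      (Classical.arbitrary _) (Real.sqrt_nonneg _)
  have hSi : ∀ i, Real.sqrt (cinf i) ≤ S := by
    intro i
    rw [hS_def]
    exact le_ciSup (f := fun j => Real.sqrt (cinf j))
      (Set.Finite.bddAbove (Set.finite_range _)) i
  have hpsii : ∀ i, Psi (c t i) (cinf i) ≤ Ent (c t) cinf := by
    intro i
    rw [ent_eq_psi]
    exact Finset.single_le_sum
      (fun j _ => psi_nonneg (hcpos t ht.le j).le (hcinf j)) (Finset.mem_univ i)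
  have hub : ∀ i, c t i ≤ KT := by
    intro i
    have h2 := le_two_psi (hcpos t ht.le i).le (hcinf i)
    have h3 : cinf i ≤ ∑ j, cinf j :=
      Finset.single_le_sum (fun j (_ : j ∈ Finset.univ) => (hcinf j).le) (Finset.mem_univ i)
    have h4 : Psi (c t i) (cinf i) ≤ Ent (c 0) cinf := le_trans (hpsii i) (hmono t ht.le)
    rw [hKT_def]
    linarith
  have hpoint : ∀ i, |c t i - cinf i| ^ 2 ≤
      (Real.sqrt KT + S) ^ 2 * Psi (c t i) (cinf i) := by
    intro i
    have hxi := (hcpos t ht.le i).le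
    set a : ℝ := Real.sqrt (c t i) with ha_def
    set b : ℝ := Real.sqrt (cinf i) with hb_def
    have ha2 : a ^ 2 = c t i := Real.sq_sqrt hxi
    have hb2 : b ^ 2 = cinf i := Real.sq_sqrt (hcinf i).le
    have hfac : |c t i - cinf i| ^ 2 = (a - b) ^ 2 * (a + b) ^ 2 := by
      rw [sq_abs, ← ha2, ← hb2]
      ring
    have hab : (a + b) ^ 2 ≤ (Real.sqrt KT + S) ^ 2 := by
      have haKT : a ≤ Real.sqrt KT := Real.sqrt_le_sqrt (hub i)
      have hbS : b ≤ S := hSi i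
      have : a + b ≤ Real.sqrt KT + S := add_le_add haKT hbS
      exact pow_le_pow_left₀ (by positivity) this 2
    have hsub : (a - b) ^ 2 ≤ Psi (c t i) (cinf i) := sq_sub_sqrt_le_psi hxi (hcinf i)
    calc |c t i - cinf i| ^ 2 = (a - b) ^ 2 * (a + b) ^ 2 := hfac
      _ ≤ Psi (c t i) (cinf i) * (Real.sqrt KT + S) ^ 2 :=
          mul_le_mul hsub hab (sq_nonneg _) (psi_nonneg hxi (hcinf i))
      _ = (Real.sqrt KT + S) ^ 2 * Psi (c t i) (cinf i) := by ring
  calc ∑ i, |c t i - cinf i| ^ 2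
      ≤ ∑ i, (Real.sqrt KT + S) ^ 2 * Psi (c t i) (cinf i) :=
        Finset.sum_le_sum fun i _ => hpoint i
    _ = (Real.sqrt KT + S) ^ 2 * Ent (c t) cinf := by
        rw [← Finset.mul_sum, ent_eq_psi]
    _ ≤ (Real.sqrt KT + S) ^ 2 * (Ent (c 0) cinf * Real.exp (-lam0 * t)) :=
        mul_le_mul_of_nonneg_left hdecay (by positivity)
    _ = (Real.sqrt KT + S) ^ 2 * Ent (c 0) cinf * Real.exp (-lam0 * t) := by ring


end Stmt4
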